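/- arXiv:1007.3886 — 14 statements merged into one kernel-verified Lean document; each statement's English description precedes it below -/
import Mathlib

section
/- In an imitation game on N pure strategies, where player 2's payoff matrix is the N×N identity matrix, if (x, y) is an ε-well-supported Nash equilibrium with ε ≤ 1/N, then the support of y is contained in the support of x. -/
/-- Imitation lemma: in an imitation game (player 2's payoff matrix is the identity,
so player 2's expected payoff vector is `x`), if `(x, y)` is an `ε`-well-supported
Nash equilibrium with `ε ≤ 1/N`, then `support y ⊆ support x`. -/
theorem stmt1 (N : ℕ) (hN : 0 < N) (ε : ℝ) (hε : ε ≤ 1 / N)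
    (x y : Fin N → ℝ)
    (hx : ∀ j, 0 ≤ x j) (hxs : ∑ j, x j = 1)
    (hy : ∀ j, 0 ≤ y j) (hys : ∑ j, y j = 1)
    -- every strategy in the support of y is an ε-best response for player 2,
    -- whose expected payoff vector is x
    (hwsne2 : ∀ j, 0 < y j → ∀ j', x j ≥ x j' - ε) :
    ∀ j, 0 < y j → 0 < x j := by
  intro j hyj
  by_contra hxj
  have hxj0 : x j = 0 := le_antisymm (not_lt.mp hxj) (hx j)
  have hNR : (0:ℝ) < N := by exact_mod_cast hN
  have hle : ∀ j', x j' ≤ 1 / N := fun j' => by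
    have := hwsne2 j hyj j'
    linarith
  have hlt : ∑ j', x j' < ∑ _j' : Fin N, (1 / N : ℝ) := by
    apply Finset.sum_lt_sum (fun i _ => hle i)
    exact ⟨j, Finset.mem_univ j, by rw [hxj0]; positivity⟩
  have : ∑ _j' : Fin N, (1 / N : ℝ) = 1 := by
    simp [Finset.sum_const, Finset.card_univ]
    field_simp
  linarith
end

section
/- In a block ε-uniform game with blocks of sizes n_1,…,n_m and diagonal penalty α = 8m²/ε, if (x, y) is an ε-well-supported Nash equilibrium and block i belongs to the support of x, then for every block i', ‖y^i‖₁ ≤ ‖y^{i'}‖₁ + (1+ε)/α. -/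
/-- ε-uniform weight distribution in a block ε-uniform game: if block `i` belongs to
the support of player 1's strategy `x`, then for every block `i'`,
`‖y^i‖₁ ≤ ‖y^{i'}‖₁ + (1+ε)/α`, where `α = 8m²/ε`. -/
theorem stmt3 (m : ℕ) (n : Fin m → ℕ) (hn : ∀ i, 0 < n i)
    (ε α : ℝ) (hε : 0 < ε) (hα : α = 8 * (m : ℝ) ^ 2 / ε)
    (A : (Σ i, Fin (n i)) → (Σ i, Fin (n i)) → ℝ)
    (hdiag : ∀ s t : Σ i, Fin (n i), s.1 = t.1 → A s t = -α)
    (hoff : ∀ s t : Σ i, Fin (n i), s.1 ≠ t.1 → 0 ≤ A s t ∧ A s t ≤ 1)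
    (x y : (Σ i, Fin (n i)) → ℝ)
    (hx : ∀ s, 0 ≤ x s) (hxs : ∑ s, x s = 1)
    (hy : ∀ s, 0 ≤ y s) (hys : ∑ s, y s = 1)
    -- strategies in the support of x are ε-best responses for player 1
    (hwsne1 : ∀ s, 0 < x s → ∀ t, (∑ r, A s r * y r) ≥ (∑ r, A t r * y r) - ε)
    (i : Fin m) (hi : ∃ a : Fin (n i), 0 < x ⟨i, a⟩) :
    ∀ i' : Fin m,
      (∑ a : Fin (n i), y ⟨i, a⟩) ≤ (∑ a : Fin (n i'), y ⟨i', a⟩) + (1 + ε) / α := by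
  intro i'
  obtain ⟨a, ha⟩ := hi
  have hm : 0 < m := i.pos
  have hαpos : 0 < α := by
    rw [hα]
    have : (0:ℝ) < (m:ℝ) := by exact_mod_cast hm
    positivity
  set Y : Fin m → ℝ := fun j => ∑ b : Fin (n j), y ⟨j, b⟩ with hY
  have hYnn : ∀ j, 0 ≤ Y j := fun j => Finset.sum_nonneg fun b _ => hy _
  have hsig : ∀ f : (Σ j, Fin (n j)) → ℝ,
      (∑ r, f r) = ∑ j, ∑ b : Fin (n j), f ⟨j, b⟩ := by
    intro f
    rw [← Finset.univ_sigma_univ, Finset.sum_sigma]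
  have hYsum : ∑ j, Y j = 1 := by rw [← hys, hsig]
  set s : Σ j, Fin (n j) := ⟨i, a⟩ with hs
  set t : Σ j, Fin (n j) := ⟨i', ⟨0, hn i'⟩⟩ with ht
  have hub : (∑ r, A s r * y r) ≤ -α * Y i + 1 := by
    rw [hsig]
    have h2 : ∀ j, (∑ b : Fin (n j), A s ⟨j, b⟩ * y ⟨j, b⟩)
        ≤ if j = i then -α * Y j else Y j := by
      intro j
      by_cases hj : j = i
      · subst hj
        rw [if_pos rfl, hY]
        simp only [Finset.mul_sum]
        apply le_of_eq
        apply Finset.sum_congr rfl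
        intro b _
        rw [hdiag s ⟨j, b⟩ rfl]
      · rw [if_neg hj]
        apply Finset.sum_le_sum
        intro b _
        have h := hoff s ⟨j, b⟩ (by simp only [hs]; exact fun h => hj h.symm)
        nlinarith [hy (⟨j, b⟩ : Σ j, Fin (n j))]
    have hsplit : ∀ j, (if j = i then -α * Y j else Y j)
        = Y j + (if j = i then -α * Y i - Y i else 0) := by
      intro j
      by_cases hj : j = i
      · subst hj; simp
      · simp [hj]
    calc (∑ j, ∑ b : Fin (n j), A s ⟨j, b⟩ * y ⟨j, b⟩)
        ≤ ∑ j, if j = i then -α * Y j else Y j := Finset.sum_le_sum fun j _ => h2 j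
      _ = ∑ j, (Y j + (if j = i then -α * Y i - Y i else 0)) := by
          exact Finset.sum_congr rfl fun j _ => hsplit j
      _ = (∑ j, Y j) + (∑ j, if j = i then -α * Y i - Y i else 0) := by
          rw [Finset.sum_add_distrib]
      _ = 1 + (-α * Y i - Y i) := by
          rw [hYsum, Finset.sum_ite_eq' Finset.univ i (fun _ => -α * Y i - Y i)]
          simp
      _ ≤ -α * Y i + 1 := by linarith [hYnn i]
  have hlb : -α * Y i' ≤ (∑ r, A t r * y r) := by
    rw [hsig]
    have h2 : ∀ j, (if j = i' then -α * Y j else 0)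
        ≤ ∑ b : Fin (n j), A t ⟨j, b⟩ * y ⟨j, b⟩ := by
      intro j
      by_cases hj : j = i'
      · subst hj
        rw [if_pos rfl, hY]
        simp only [Finset.mul_sum]
        apply le_of_eq
        apply Finset.sum_congr rfl
        intro b _
        rw [hdiag t ⟨j, b⟩ rfl]
      · rw [if_neg hj]
        apply Finset.sum_nonneg
        intro b _
        have h := hoff t ⟨j, b⟩ (by simp only [ht]; exact fun h => hj h.symm)
        exact mul_nonneg h.1 (hy _)
    calc -α * Y i' = ∑ j, if j = i' then -α * Y j else 0 := by
          rw [Finset.sum_ite_eq' Finset.univ i' (fun j => -α * Y j)]; simp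
      _ ≤ _ := Finset.sum_le_sum fun j _ => h2 j
  have hkey := hwsne1 s ha t
  have hmain : α * Y i ≤ α * Y i' + (1 + ε) := by linarith
  have h2 : (1 + ε) / α * α = 1 + ε := div_mul_cancel₀ _ hαpos.ne'
  show Y i ≤ Y i' + (1 + ε) / α
  nlinarith [hmain, h2, hαpos]
end

section
/- In a block ε-uniform imitation game on N total pure strategies with m blocks and α = 8m²/ε, if (x, y) is an ε-well-supported Nash equilibrium with ε ≤ 1/N, then for every two blocks i, i', ‖y^i‖₁ = ‖y^{i'}‖₁ ± (1+ε)/α; in particular every block carries positive weight. -/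
/-- In a block ε-uniform imitation game with `ε ≤ 1/N`, the weight of player 2 is
divided ε-uniformly among all blocks: `‖y^i‖₁ = ‖y^{i'}‖₁ ± (1+ε)/α` for all blocks
`i, i'`, and in particular every block carries positive weight. -/
theorem stmt4 (m : ℕ) (n : Fin m → ℕ) (hn : ∀ i, 0 < n i)
    (ε α : ℝ) (hε : 0 < ε) (hα : α = 8 * (m : ℝ) ^ 2 / ε)
    (hεN : ε ≤ 1 / (Fintype.card (Σ i, Fin (n i)) : ℝ))
    (A : (Σ i, Fin (n i)) → (Σ i, Fin (n i)) → ℝ)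
    (hdiag : ∀ s t : Σ i, Fin (n i), s.1 = t.1 → A s t = -α)
    (hoff : ∀ s t : Σ i, Fin (n i), s.1 ≠ t.1 → 0 ≤ A s t ∧ A s t ≤ 1)
    (x y : (Σ i, Fin (n i)) → ℝ)
    (hx : ∀ s, 0 ≤ x s) (hxs : ∑ s, x s = 1)
    (hy : ∀ s, 0 ≤ y s) (hys : ∑ s, y s = 1)
    -- player 1 plays ε-best responses on the support of x
    (hwsne1 : ∀ s, 0 < x s → ∀ t, (∑ r, A s r * y r) ≥ (∑ r, A t r * y r) - ε)
    -- player 2's payoff matrix is the identity: its expected payoff vector is x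
    (hwsne2 : ∀ s, 0 < y s → ∀ t, x s ≥ x t - ε) :
    (∀ i i' : Fin m,
      |(∑ a : Fin (n i), y ⟨i, a⟩) - (∑ a : Fin (n i'), y ⟨i', a⟩)| ≤ (1 + ε) / α) ∧
    (∀ i : Fin m, 0 < ∑ a : Fin (n i), y ⟨i, a⟩) := by
  classical
  -- the case m = 0 is contradictory
  rcases Nat.eq_zero_or_pos m with hm0 | hm0
  · exfalso
    subst hm0
    rw [Finset.sum_eq_zero (fun s _ => (s.1.elim0 : y s = 0))] at hys
    exact one_ne_zero hys.symm
  have hm1 : (1 : ℝ) ≤ (m : ℝ) := by exact_mod_cast hm0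
  haveI : Nonempty (Σ i, Fin (n i)) := ⟨⟨⟨0, hm0⟩, ⟨0, hn _⟩⟩⟩
  have hNpos : 0 < (Fintype.card (Σ i, Fin (n i)) : ℝ) := by
    exact_mod_cast Fintype.card_pos
  have hN1 : 1 ≤ (Fintype.card (Σ i, Fin (n i)) : ℝ) := by
    exact_mod_cast Fintype.card_pos
  have hε1 : ε ≤ 1 := hεN.trans (by rw [div_le_one hNpos]; exact hN1)
  have hα0 : 0 < α := by rw [hα]; positivity
  -- block weights
  set w : Fin m → ℝ := fun i => ∑ a : Fin (n i), y ⟨i, a⟩ with hwdef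
  have hsplit : ∀ f : (Σ i, Fin (n i)) → ℝ,
      ∑ s, f s = ∑ i, ∑ a : Fin (n i), f ⟨i, a⟩ := by
    intro f
    rw [← Finset.univ_sigma_univ, Finset.sum_sigma]
  have hw0 : ∀ i, 0 ≤ w i := fun i => Finset.sum_nonneg fun a _ => hy _
  have hw1 : ∑ i, w i = 1 := (hsplit y).symm.trans hys
  -- imitation lemma: supp y ⊆ supp x
  have himit : ∀ s, 0 < y s → 0 < x s := by
    intro s hs
    by_contra hxs0
    push_neg at hxs0
    have hxse : x s = 0 := le_antisymm hxs0 (hx s)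
    have hlt : ∑ t, x t <
        ∑ _t : (Σ i, Fin (n i)), (1 / (Fintype.card (Σ i, Fin (n i)) : ℝ)) := by
      refine Finset.sum_lt_sum (fun t _ => ?_) ⟨s, Finset.mem_univ s, ?_⟩
      · have := hwsne2 s hs t
        linarith [hεN]
      · rw [hxse]; positivity
    rw [Finset.sum_const, Finset.card_univ, nsmul_eq_mul,
      mul_one_div, div_self (ne_of_gt hNpos), hxs] at hlt
    exact lt_irrefl _ hlt
  -- there is a positive entry of x inside any block of positive y-weight
  have hsupp : ∀ i, 0 < w i → ∃ a : Fin (n i), 0 < x ⟨i, a⟩ := by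
    intro i hi
    by_contra h
    push_neg at h
    have : w i ≤ 0 := Finset.sum_nonpos fun a _ => by
      by_contra hya
      push_neg at hya
      exact absurd (himit _ hya) (not_lt.mpr (h a))
    linarith
  -- block-weight lemma
  have hblock : ∀ i : Fin m, (∃ a : Fin (n i), 0 < x ⟨i, a⟩) →
      ∀ i' : Fin m, w i ≤ w i' + (1 + ε) / α := by
    intro i hex i'
    obtain ⟨a, hxa⟩ := hex
    set s : (Σ i, Fin (n i)) := ⟨i, a⟩ with hsdef
    set t : (Σ i, Fin (n i)) := ⟨i', ⟨0, hn i'⟩⟩ with htdef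
    -- upper bound on the payoff of s
    have hup : ∑ r, A s r * y r ≤ 1 - α * w i := by
      rw [hsplit]
      rw [← Finset.add_sum_erase _ _ (Finset.mem_univ i)]
      have h1 : ∑ b : Fin (n i), A s ⟨i, b⟩ * y ⟨i, b⟩ = -α * w i := by
        rw [Finset.mul_sum]
        exact Finset.sum_congr rfl fun b _ => by rw [hdiag s ⟨i, b⟩ rfl]
      have h2 : ∑ j ∈ Finset.univ.erase i, ∑ b : Fin (n j), A s ⟨j, b⟩ * y ⟨j, b⟩ ≤ 1 := by
        calc ∑ j ∈ Finset.univ.erase i, ∑ b : Fin (n j), A s ⟨j, b⟩ * y ⟨j, b⟩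
            ≤ ∑ j ∈ Finset.univ.erase i, w j := by
              refine Finset.sum_le_sum fun j hj => Finset.sum_le_sum fun b _ => ?_
              have hne : s.1 ≠ (⟨j, b⟩ : Σ i, Fin (n i)).1 :=
                (Finset.ne_of_mem_erase hj).symm
              calc A s ⟨j, b⟩ * y ⟨j, b⟩ ≤ 1 * y ⟨j, b⟩ :=
                    mul_le_mul_of_nonneg_right (hoff s ⟨j, b⟩ hne).2 (hy _)
                _ = y ⟨j, b⟩ := one_mul _
          _ ≤ ∑ j, w j := Finset.sum_le_sum_of_subset_of_nonneg
              (Finset.erase_subset _ _) (fun j _ _ => hw0 j)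
          _ = 1 := hw1
      linarith
    -- lower bound on the payoff of t
    have hlo : -α * w i' ≤ ∑ r, A t r * y r := by
      rw [hsplit]
      rw [← Finset.add_sum_erase _ _ (Finset.mem_univ i')]
      have h1 : ∑ b : Fin (n i'), A t ⟨i', b⟩ * y ⟨i', b⟩ = -α * w i' := by
        rw [Finset.mul_sum]
        exact Finset.sum_congr rfl fun b _ => by rw [hdiag t ⟨i', b⟩ rfl]
      have h2 : 0 ≤ ∑ j ∈ Finset.univ.erase i', ∑ b : Fin (n j), A t ⟨j, b⟩ * y ⟨j, b⟩ := by
        refine Finset.sum_nonneg fun j hj => Finset.sum_nonneg fun b _ => ?_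
        have hne : t.1 ≠ (⟨j, b⟩ : Σ i, Fin (n i)).1 := (Finset.ne_of_mem_erase hj).symm
        exact mul_nonneg (hoff t ⟨j, b⟩ hne).1 (hy _)
      linarith
    have hbr := hwsne1 s hxa t
    have key : α * (w i - w i') ≤ 1 + ε := by linarith
    have : w i - w i' ≤ (1 + ε) / α := by
      rw [le_div_iff₀ hα0, mul_comm]; exact key
    linarith
  -- (1+ε)/α < 1/m
  haveI : Nonempty (Fin m) := ⟨⟨0, hm0⟩⟩
  have hsmall : (1 + ε) / α < 1 / (m : ℝ) := by
    have heq : (1 + ε) / α = (1 + ε) * ε / (8 * (m : ℝ) ^ 2) := by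
      rw [hα]; field_simp
    rw [heq, div_lt_div_iff₀ (by positivity) (by linarith)]
    have h2 : (1 + ε) * ε ≤ 2 := by nlinarith
    have h3 : (1 + ε) * ε * (m : ℝ) ≤ 2 * (m : ℝ) :=
      mul_le_mul_of_nonneg_right h2 (by linarith)
    have h4 : (m : ℝ) ≤ (m : ℝ) ^ 2 := by nlinarith
    nlinarith
  -- some block has weight ≥ 1/m
  obtain ⟨i₀, -, hbig⟩ : ∃ i ∈ Finset.univ, 1 / (m : ℝ) ≤ w i := by
    apply Finset.exists_le_of_sum_le Finset.univ_nonempty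
    rw [hw1, Finset.sum_const, Finset.card_univ, nsmul_eq_mul, Fintype.card_fin,
      mul_one_div, div_self (by linarith : (m : ℝ) ≠ 0)]
  have hmpos : 0 < 1 / (m : ℝ) := by positivity
  -- every block carries positive weight
  have hpos : ∀ i, 0 < w i := by
    intro i'
    by_contra h
    push_neg at h
    have hwi' : w i' = 0 := le_antisymm h (hw0 i')
    obtain ⟨a, hxa⟩ := hsupp i₀ (lt_of_lt_of_le hmpos hbig)
    have := hblock i₀ ⟨a, hxa⟩ i'
    rw [hwi'] at this
    linarith
  refine ⟨fun i i' => ?_, hpos⟩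
  obtain ⟨a, hxa⟩ := hsupp i (hpos i)
  obtain ⟨a', hxa'⟩ := hsupp i' (hpos i')
  have h1 := hblock i ⟨a, hxa⟩ i'
  have h2 := hblock i' ⟨a', hxa'⟩ i
  rw [abs_sub_le_iff]
  constructor <;> linarith
end

section
/- For the AND gadget whose output player has expected payoff vector u = (3/4, (p₁+p₂)/2) on binary inputs p₁, p₂ ∈ [0,1]: in any ε-well-supported Nash equilibrium with ε < 1/4, the output value p equals 1 if p₁ = p₂ = 1, and 0 if p₁ = 0 or p₂ = 0. -/
/-- AND gadget: the output player has expected payoff `3/4` for strategy 0 and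
`(p₁+p₂)/2` for strategy 1. In any ε-well-supported NE with `ε < 1/4`, the output
is 1 if `p₁ = p₂ = 1` and 0 if `p₁ = 0` or `p₂ = 0`. -/
theorem stmt6 (p₁ p₂ p ε : ℝ) (hε : ε < 1/4)
    (hp₁ : 0 ≤ p₁) (hp₁' : p₁ ≤ 1) (hp₂ : 0 ≤ p₂) (hp₂' : p₂ ≤ 1)
    (hp : 0 ≤ p) (hp' : p ≤ 1)
    (h0 : p < 1 → (3:ℝ)/4 ≥ (p₁ + p₂)/2 - ε)
    (h1 : 0 < p → (p₁ + p₂)/2 ≥ (3:ℝ)/4 - ε) :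
    ((p₁ = 1 ∧ p₂ = 1) → p = 1) ∧ ((p₁ = 0 ∨ p₂ = 0) → p = 0) := by
  constructor
  · rintro ⟨rfl, rfl⟩
    by_contra h
    have := h0 (lt_of_le_of_ne hp' h)
    linarith
  · rintro (rfl | rfl) <;>
    · by_contra h
      have := h1 (lt_of_le_of_ne hp (Ne.symm h))
      linarith
end

section
/- For the scaled-summation gadget with rational ζ ∈ [0,1] and inputs p₁,…,p_m ∈ [0,1]: in any ε-well-supported Nash equilibrium, the output value p satisfies p = min{ζ(p₁+⋯+p_m), 1} ± ε. -/
/-- Scaled-summation gadget: auxiliary player W has payoff vector `(p, ζ·Σᵢ pᵢ)` and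
output player P has payoff vector `(1-w, w)`. In any ε-well-supported NE, the output
satisfies `p = min{ζ(p₁+⋯+p_m), 1} ± ε`. -/
theorem stmt7 (m : ℕ) (ζ ε w p : ℝ) (pin : Fin m → ℝ)
    (hζ : 0 ≤ ζ) (hζ' : ζ ≤ 1) (hε : 0 ≤ ε)
    (hin : ∀ i, 0 ≤ pin i ∧ pin i ≤ 1)
    (hw : 0 ≤ w) (hw' : w ≤ 1) (hp : 0 ≤ p) (hp' : p ≤ 1)
    -- ε-well-supported NE conditions for W (payoffs (p, ζΣpᵢ)):
    (hW0 : w < 1 → p ≥ ζ * (∑ i, pin i) - ε)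
    (hW1 : 0 < w → ζ * (∑ i, pin i) ≥ p - ε)
    -- ε-well-supported NE conditions for P (payoffs (1-w, w)):
    (hP0 : p < 1 → 1 - w ≥ w - ε)
    (hP1 : 0 < p → w ≥ (1 - w) - ε) :
    |p - min (ζ * ∑ i, pin i) 1| ≤ ε := by
  set S := ζ * ∑ i, pin i with hS
  have hS0 : 0 ≤ S := mul_nonneg hζ (Finset.sum_nonneg fun i _ => (hin i).1)
  rw [abs_le]
  rcases le_or_gt S 1 with hle | hgt
  · rw [min_eq_left hle]
    constructor
    · -- p ≥ S - ε
      rcases lt_or_ge w 1 with h1 | h1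
      · linarith [hW0 h1]
      · have hw1 : w = 1 := le_antisymm hw' h1
        rcases lt_or_ge p 1 with hp1 | hp1
        · have := hP0 hp1; linarith
        · linarith
    · -- p ≤ S + ε
      rcases lt_or_ge 0 w with h0 | h0
      · linarith [hW1 h0]
      · have hw0 : w = 0 := le_antisymm h0 hw
        rcases lt_or_ge 0 p with hp1 | hp1
        · have := hP1 hp1; linarith
        · linarith
  · rw [min_eq_right hgt.le]
    constructor
    · -- p ≥ 1 - ε
      rcases lt_or_ge w 1 with h1 | h1
      · linarith [hW0 h1]
      · rcases lt_or_ge p 1 with hp1 | hp1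
        · have := hP0 hp1; linarith
        · linarith
    · linarith
end

section
/- For the mask gadget: in any ε-well-supported Nash equilibrium, the output value p satisfies: p = p₂ ± ε if p₁ = 1; p = 0 if p₁ = 0; and p = 0 ± 3ε if p₂ ≤ 2ε. -/
/-- Mask gadget: auxiliary player W has payoff vector `(p + 2(1-p₁), p₂)` and output
player P has payoff vector `(1-w, w)`. In any ε-well-supported NE: `p = p₂ ± ε` if
`p₁ = 1`; `p = 0` if `p₁ = 0`; and `p = 0 ± 3ε` if `p₂ ≤ 2ε`. -/
theorem stmt8 (p₁ p₂ p w ε : ℝ) (hε : 0 ≤ ε) (hε' : ε < 1)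
    (hp₁ : 0 ≤ p₁) (hp₁' : p₁ ≤ 1) (hp₂ : 0 ≤ p₂) (hp₂' : p₂ ≤ 1)
    (hw : 0 ≤ w) (hw' : w ≤ 1) (hp : 0 ≤ p) (hp' : p ≤ 1)
    (hW0 : w < 1 → p + 2 * (1 - p₁) ≥ p₂ - ε)
    (hW1 : 0 < w → p₂ ≥ p + 2 * (1 - p₁) - ε)
    (hP0 : p < 1 → 1 - w ≥ w - ε)
    (hP1 : 0 < p → w ≥ (1 - w) - ε) :
    (p₁ = 1 → |p - p₂| ≤ ε) ∧ (p₁ = 0 → p = 0) ∧ (p₂ ≤ 2 * ε → |p| ≤ 3 * ε) := by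
  have hw0 : w = 0 → p = 0 := by
    intro h0
    by_contra hne
    have hpp : 0 < p := lt_of_le_of_ne hp (Ne.symm hne)
    have := hP1 hpp
    linarith
  refine ⟨?_, ?_, ?_⟩
  · intro h1
    subst h1
    rcases eq_or_lt_of_le hw with hw0' | hwpos
    · have hp0 : p = 0 := hw0 hw0'.symm
      have := hW0 (by linarith)
      rw [abs_le]; constructor <;> nlinarith
    · rcases eq_or_lt_of_le hw' with hw1 | hwlt
      · have hp1 : p = 1 := by
          by_contra hne
          have := hP0 (lt_of_le_of_ne hp' hne)
          linarith
        have := hW1 hwpos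
        rw [abs_le]; constructor <;> nlinarith
      · have h1 := hW0 hwlt
        have h2 := hW1 hwpos
        rw [abs_le]; constructor <;> nlinarith
  · intro h0
    subst h0
    have hw0' : w = 0 := by
      by_contra hne
      have := hW1 (lt_of_le_of_ne hw (Ne.symm hne))
      nlinarith
    exact hw0 hw0'
  · intro h2
    rcases eq_or_lt_of_le hp with hp0 | hppos
    · rw [← hp0, abs_zero]; linarith
    · have hwpos : 0 < w := by
        have := hP1 hppos
        linarith
      have := hW1 hwpos
      rw [abs_le]; constructor <;> nlinarith
end

section
/- For the subtraction gadget: in any ε-well-supported Nash equilibrium, the output value p satisfies p = max{0, p₂ − p₁} ± ε. -/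
/-- Subtraction gadget: auxiliary player W has payoff vector `(p, p₂ - p₁)` and
output player P has payoff vector `(1-w, w)`. In any ε-well-supported NE, the output
satisfies `p = max{0, p₂ - p₁} ± ε`. -/
theorem stmt9 (p₁ p₂ p w ε : ℝ) (hε : 0 ≤ ε)
    (hp₁ : 0 ≤ p₁) (hp₁' : p₁ ≤ 1) (hp₂ : 0 ≤ p₂) (hp₂' : p₂ ≤ 1)
    (hw : 0 ≤ w) (hw' : w ≤ 1) (hp : 0 ≤ p) (hp' : p ≤ 1)
    (hW0 : w < 1 → p ≥ (p₂ - p₁) - ε)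
    (hW1 : 0 < w → p₂ - p₁ ≥ p - ε)
    (hP0 : p < 1 → 1 - w ≥ w - ε)
    (hP1 : 0 < p → w ≥ (1 - w) - ε) :
    |p - max 0 (p₂ - p₁)| ≤ ε := by
  have hm0 : (0:ℝ) ≤ max 0 (p₂ - p₁) := le_max_left _ _
  have hm1 : max 0 (p₂ - p₁) ≤ 1 := max_le (by linarith) (by linarith)
  rcases le_or_gt 1 ε with h1 | h1
  · rw [abs_le]; constructor <;> linarith
  rcases eq_or_lt_of_le hw with hw0 | hw0
  · -- w = 0
    have hwlt : w < 1 := by linarith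
    have hp0 : p = 0 := by
      by_contra h
      have hppos : 0 < p := lt_of_le_of_ne hp (Ne.symm h)
      have := hP1 hppos
      linarith [hw0]
    have hd : p₂ - p₁ ≤ ε := by have := hW0 hwlt; linarith
    have hm : max 0 (p₂ - p₁) ≤ ε := max_le hε hd
    rw [abs_le]; constructor <;> linarith
  rcases lt_or_eq_of_le hw' with hw1 | hw1
  · -- 0 < w < 1
    have hub := hW0 hw1
    have hlb := hW1 hw0
    rcases max_cases 0 (p₂ - p₁) with ⟨he, hle⟩ | ⟨he, hle⟩ <;> rw [he, abs_le] <;>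
      constructor <;> linarith
  · -- w = 1
    have hp1 : p = 1 := by
      by_contra h
      have hplt : p < 1 := lt_of_le_of_ne hp' h
      have := hP0 hplt
      linarith
    have hd : p₂ - p₁ ≥ 1 - ε := by have := hW1 hw0; linarith
    have hm : max 0 (p₂ - p₁) ≥ 1 - ε := le_trans hd (le_max_right _ _)
    rw [abs_le]; constructor <;> linarith
end

section
/- For the max gadget built by combining comparison, subtraction, mask, and summation gadgets: in any ε-well-supported Nash equilibrium, the output value satisfies p = max{p₁, p₂} ± 4ε. -/
/-- Max gadget built from comparison, subtraction, mask and summation gadgets: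
assuming their guarantees hold simultaneously in an ε-well-supported NE, the output
satisfies `p = max{p₁, p₂} ± 4ε`. -/
theorem stmt10 (ε p₁ p₂ w₁ w₂ w₃ p : ℝ) (hε : 0 ≤ ε)
    (hp₁ : 0 ≤ p₁) (hp₁' : p₁ ≤ 1) (hp₂ : 0 ≤ p₂) (hp₂' : p₂ ≤ 1)
    (hw₁ : 0 ≤ w₁) (hw₁' : w₁ ≤ 1) (hw₂ : 0 ≤ w₂) (hw₂' : w₂ ≤ 1)
    (hw₃ : 0 ≤ w₃) (hw₃' : w₃ ≤ 1) (hp : 0 ≤ p) (hp' : p ≤ 1)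
    -- comparison gadget w₁ = G_<(p₁,p₂):
    (hcmp1 : p₁ < p₂ - ε → w₁ = 1) (hcmp0 : p₁ > p₂ + ε → w₁ = 0)
    -- subtraction gadget w₂ = G₋(p₂,p₁), i.e. w₂ = max{0, p₂ - p₁} ± ε:
    (hsub : |w₂ - max 0 (p₂ - p₁)| ≤ ε)
    -- mask gadget w₃ = G_mask(w₁,w₂):
    (hmask1 : w₁ = 1 → |w₃ - w₂| ≤ ε) (hmask0 : w₁ = 0 → w₃ = 0)
    (hmask2 : w₂ ≤ 2 * ε → |w₃| ≤ 3 * ε)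
    -- summation gadget p = G₊,*1(w₃,p₁):
    (hsum : |p - min (w₃ + p₁) 1| ≤ ε) :
    |p - max p₁ p₂| ≤ 4 * ε := by
  rw [abs_le] at hsub hsum ⊢
  rcases lt_or_ge p₁ (p₂ - ε) with h1 | h1
  · -- p₁ < p₂ - ε : w₁ = 1
    have hm := hmask1 (hcmp1 h1)
    rw [abs_le] at hm
    have hmax : max p₁ p₂ = p₂ := max_eq_right (by linarith)
    have hmax0 : max 0 (p₂ - p₁) = p₂ - p₁ := max_eq_right (by linarith)
    rw [hmax0] at hsub
    rw [hmax]
    rcases le_or_gt (w₃ + p₁) 1 with h2 | h2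
    · rw [min_eq_left h2] at hsum; constructor <;> linarith
    · rw [min_eq_right h2.le] at hsum; constructor <;> linarith
  rcases le_or_gt p₁ (p₂ + ε) with h2 | h2
  · -- middle case: w₂ ≤ 2ε
    have hw2 : w₂ ≤ 2 * ε := by
      rcases le_total (p₂ - p₁) 0 with h | h
      · rw [max_eq_left h] at hsub; linarith [hsub.2]
      · rw [max_eq_right h] at hsub; linarith [hsub.2]
    have hm := hmask2 hw2
    rw [abs_le] at hm
    have h3 : min (w₃ + p₁) 1 ≥ p₁ := le_min (by linarith) hp₁'
    have h4 : min (w₃ + p₁) 1 ≤ w₃ + p₁ := min_le_left _ _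
    rcases max_cases p₁ p₂ with ⟨he, _⟩ | ⟨he, hle⟩ <;> rw [he] <;>
      constructor <;> linarith
  · -- p₁ > p₂ + ε : w₁ = 0, w₃ = 0
    have h0 := hmask0 (hcmp0 h2)
    subst h0
    rw [min_eq_left (by linarith : (0:ℝ) + p₁ ≤ 1)] at hsum
    have hmax : max p₁ p₂ = p₁ := max_eq_left (by linarith)
    rw [hmax]; constructor <;> linarith
end

section
/- Given values p₁, p₂, p₃ ∈ [0,1] and a construction computing w₁ ≈ max{p₁,p₂}, w₂ ≈ min{p₁,p₂}, w₃ ≈ min{p₃, w₁}, p ≈ max{w₂, w₃}, where each max is accurate to ±4ε and each min to ±8ε: the final output satisfies p = median{p₁, p₂, p₃} ± 20ε. -/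
/-- The median (middle value) of three reals. -/
def med (a b c : ℝ) : ℝ := max (min a b) (min (max a b) c)

/-- Median gadget: given `w₁ ≈ max{p₁,p₂}`, `w₂ ≈ min{p₁,p₂}`, `w₃ ≈ min{p₃,w₁}`
and `p ≈ max{w₂,w₃}` (max within ±4ε, min within ±8ε), the output satisfies
`p = median{p₁,p₂,p₃} ± 20ε`. -/
theorem stmt11 (ε p₁ p₂ p₃ w₁ w₂ w₃ p : ℝ) (hε : 0 < ε)
    (hp₁ : 0 ≤ p₁) (hp₁' : p₁ ≤ 1) (hp₂ : 0 ≤ p₂) (hp₂' : p₂ ≤ 1)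
    (hp₃ : 0 ≤ p₃) (hp₃' : p₃ ≤ 1)
    (hw₁ : 0 ≤ w₁) (hw₁' : w₁ ≤ 1) (hw₂ : 0 ≤ w₂) (hw₂' : w₂ ≤ 1)
    (hw₃ : 0 ≤ w₃) (hw₃' : w₃ ≤ 1) (hp : 0 ≤ p) (hp' : p ≤ 1)
    (h₁ : |w₁ - max p₁ p₂| ≤ 4 * ε)
    (h₂ : |w₂ - min p₁ p₂| ≤ 8 * ε)
    (h₃ : |w₃ - min p₃ w₁| ≤ 8 * ε)
    (h₄ : |p - max w₂ w₃| ≤ 4 * ε) :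
    |p - med p₁ p₂ p₃| ≤ 20 * ε := by
  have A : |min p₃ w₁ - min p₃ (max p₁ p₂)| ≤ 4 * ε := by
    calc |min p₃ w₁ - min p₃ (max p₁ p₂)| ≤ max |p₃ - p₃| |w₁ - max p₁ p₂| :=
          abs_min_sub_min_le_max _ _ _ _
      _ ≤ 4 * ε := by
          simp only [sub_self, abs_zero]
          exact max_le (by positivity) h₁
  have B : |w₃ - min (max p₁ p₂) p₃| ≤ 12 * ε := by
    have := abs_sub_le w₃ (min p₃ w₁) (min p₃ (max p₁ p₂))
    rw [min_comm (max p₁ p₂) p₃]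
    linarith
  have C : |max w₂ w₃ - max (min p₁ p₂) (min (max p₁ p₂) p₃)| ≤ 12 * ε := by
    calc |max w₂ w₃ - max (min p₁ p₂) (min (max p₁ p₂) p₃)|
        ≤ max |w₂ - min p₁ p₂| |w₃ - min (max p₁ p₂) p₃| := abs_max_sub_max_le_max _ _ _ _
      _ ≤ 12 * ε := max_le (by linarith) B
  have := abs_sub_le p (max w₂ w₃) (max (min p₁ p₂) (min (max p₁ p₂) p₃))
  unfold med
  linarith
end

section
/- Unary encoding correctness: Suppose p₁ ∈ [0,1] with p₁ = i*τ + δ where 0 ≤ i* ≤ 1/τ, 0 ≤ δ < τ, and τ = 3ε. Let v ∈ [0,1]^{1/τ} satisfy: v_i = 1 whenever p₁ > iτ + ε and v_i = 0 whenever p₁ < iτ − ε. Then v_i = 1 for all i ≤ i* − 1, v_i = 0 for all i ≥ i* + 2, at most one coordinate of v is neither forced to 0 nor 1, and i* − 1 ≤ Σᵢ vᵢ ≤ i* + 1. -/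
/-!
Thresholds `iτ` are `τ = 3ε` apart while each gadget is only unreliable within `ε` of its
threshold, so `p₁ = i*τ + δ` lies in the unreliable window of at most one threshold: gadgets
`i ≤ i* - 1` see `p₁` at least `τ > ε` above their threshold and gadgets `i ≥ i* + 2` see it
more than `τ` below. The sum of `v` then counts the `i* - 1` forced ones, plus at most two
coordinates in `[0, 1]`.
-/

open Finset

section Thresholds

variable {ε τ δ : ℝ} {i k : ℕ}

lemma mul_add_lt_mul_add_of_succ_le (hτ : 0 ≤ τ) (hετ : ε < τ) (hδ : 0 ≤ δ) (hik : i + 1 ≤ k) :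
    (i : ℝ) * τ + ε < k * τ + δ := by
  have hik' : ((i : ℝ) + 1) * τ ≤ k * τ := by gcongr; exact_mod_cast hik
  linarith

lemma mul_add_lt_mul_sub_of_add_two_le (hτ : 0 ≤ τ) (hετ : ε < τ) (hδ : δ < τ)
    (hki : k + 2 ≤ i) : (k : ℝ) * τ + δ < i * τ - ε := by
  have hki' : ((k : ℝ) + 2) * τ ≤ i * τ := by gcongr; exact_mod_cast hki
  linarith

lemma eq_of_mem_window {p : ℝ} {a b : ℕ} (hτ : 2 * ε < τ)
    (ha₁ : p ≤ a * τ + ε) (ha₀ : a * τ - ε ≤ p) (hb₁ : p ≤ b * τ + ε) (hb₀ : b * τ - ε ≤ p) :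
    a = b := by
  have hτ₀ : 0 ≤ τ := by linarith
  have separated : ∀ {m n : ℕ}, m < n → ((m : ℝ) + 1) * τ ≤ n * τ := fun hmn => by
    gcongr; exact_mod_cast hmn
  rcases lt_trichotomy a b with hab | hab | hab
  · linarith [separated hab]
  · exact hab
  · linarith [separated hab]

end Thresholds

section UnitIntervalSums

variable {ι : Type*} {s t : Finset ι} {f : ι → ℝ}

lemma card_le_sum_of_eq_one (hts : t ⊆ s) (h₁ : ∀ i ∈ t, f i = 1) (h₀ : ∀ i ∈ s, 0 ≤ f i) :
    (#t : ℝ) ≤ ∑ i ∈ s, f i := by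
  calc (#t : ℝ) = ∑ i ∈ t, f i := by simp [sum_congr rfl h₁]
    _ ≤ ∑ i ∈ s, f i := sum_le_sum_of_subset_of_nonneg hts fun i hi _ => h₀ i hi

lemma sum_le_card_of_eq_zero (h₁ : ∀ i ∈ s, f i ≤ 1) (h₀ : ∀ i ∈ s, i ∉ t → f i = 0) :
    ∑ i ∈ s, f i ≤ #t := by
  classical
  calc ∑ i ∈ s, f i = ∑ i ∈ s ∩ t, f i :=
        (sum_subset inter_subset_left fun i hs hst =>
          h₀ i hs fun ht => hst (mem_inter.2 ⟨hs, ht⟩)).symm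
    _ ≤ #(s ∩ t) • (1 : ℝ) := sum_le_card_nsmul _ _ _ fun i hi => h₁ i (mem_inter.1 hi).1
    _ ≤ #t := by simpa using card_le_card inter_subset_right

end UnitIntervalSums

theorem stmt13_general (ε τ δ p₁ : ℝ) (M istar : ℕ) (v : ℕ → ℝ)
    (hε : 0 < ε) (hτ : τ = 3 * ε)
    (histar : istar ≤ M) (hδ0 : 0 ≤ δ) (hδτ : δ < τ)
    (hp₁ : p₁ = (istar : ℝ) * τ + δ)
    (hv : ∀ i ∈ Icc 1 M, 0 ≤ v i ∧ v i ≤ 1)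
    -- threshold gadget guarantees: v i = G_{> iτ}(p₁)
    (hth1 : ∀ i ∈ Icc 1 M, p₁ > (i : ℝ) * τ + ε → v i = 1)
    (hth0 : ∀ i ∈ Icc 1 M, p₁ < (i : ℝ) * τ - ε → v i = 0) :
    (∀ i ∈ Icc 1 M, i + 1 ≤ istar → v i = 1) ∧
    (∀ i ∈ Icc 1 M, istar + 2 ≤ i → v i = 0) ∧
    ((Icc 1 M).filter
        (fun (i : ℕ) => ¬(p₁ > (i : ℝ) * τ + ε) ∧ ¬(p₁ < (i : ℝ) * τ - ε))).card ≤ 1 ∧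
    ((istar : ℝ) - 1 ≤ ∑ i ∈ Icc 1 M, v i ∧ ∑ i ∈ Icc 1 M, v i ≤ (istar : ℝ) + 1) := by
  have hτ₀ : 0 ≤ τ := by linarith
  have hετ : ε < τ := by linarith
  have h₁ : ∀ i ∈ Icc 1 M, i + 1 ≤ istar → v i = 1 := fun i hi hle =>
    hth1 i hi (hp₁ ▸ mul_add_lt_mul_add_of_succ_le hτ₀ hετ hδ0 hle)
  have h₀ : ∀ i ∈ Icc 1 M, istar + 2 ≤ i → v i = 0 := fun i hi hle =>
    hth0 i hi (hp₁ ▸ mul_add_lt_mul_sub_of_add_two_le hτ₀ hετ hδτ hle)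
  refine ⟨h₁, h₀, card_le_one.2 fun a ha b hb => ?_, ?_, ?_⟩
  · simp only [mem_filter, gt_iff_lt, not_lt] at ha hb
    exact eq_of_mem_window (by linarith) ha.2.1 ha.2.2 hb.2.1 hb.2.2
  · have hlow := card_le_sum_of_eq_one (f := v) (Icc_subset_Icc_right (by omega : istar - 1 ≤ M))
      (fun i hi => h₁ i (Icc_subset_Icc_right (by omega) hi) (by simp at hi; omega))
      fun i hi => (hv i hi).1
    have hcast : (istar : ℝ) ≤ (istar - 1 : ℕ) + 1 := by
      exact_mod_cast (by omega : istar ≤ istar - 1 + 1)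
    rw [Nat.card_Icc, Nat.add_sub_cancel] at hlow
    linarith
  · have hup := sum_le_card_of_eq_zero (t := Icc 1 (istar + 1)) (fun i hi => (hv i hi).2)
      fun i hi hnot => h₀ i hi (by simp at hi hnot; omega)
    simpa using hup

open Finset in
/-- Unary encoding correctness: with `τ = 3ε`, `p₁ = i*τ + δ` and threshold-gadget
outputs `v_i`, the vector `v` is of the form `(1,…,1,?,0,…,0)`: `v_i = 1` for
`i ≤ i*-1`, `v_i = 0` for `i ≥ i*+2`, at most one coordinate is unforced, and
`i* - 1 ≤ Σᵢ vᵢ ≤ i* + 1`. -/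
theorem stmt13 (ε τ δ p₁ : ℝ) (M istar : ℕ) (v : ℕ → ℝ)
    (hε : 0 < ε) (hτ : τ = 3 * ε) (hM : (M : ℝ) * τ = 1)
    (histar : istar ≤ M) (hδ0 : 0 ≤ δ) (hδτ : δ < τ)
    (hp₁ : p₁ = (istar : ℝ) * τ + δ)
    (hv : ∀ i ∈ Icc 1 M, 0 ≤ v i ∧ v i ≤ 1)
    -- threshold gadget guarantees: v i = G_{> iτ}(p₁)
    (hth1 : ∀ i ∈ Icc 1 M, p₁ > (i : ℝ) * τ + ε → v i = 1)
    (hth0 : ∀ i ∈ Icc 1 M, p₁ < (i : ℝ) * τ - ε → v i = 0) :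
    (∀ i ∈ Icc 1 M, i + 1 ≤ istar → v i = 1) ∧
    (∀ i ∈ Icc 1 M, istar + 2 ≤ i → v i = 0) ∧
    ((Icc 1 M).filter
        (fun (i : ℕ) => ¬(p₁ > (i : ℝ) * τ + ε) ∧ ¬(p₁ < (i : ℝ) * τ - ε))).card ≤ 1 ∧
    ((istar : ℝ) - 1 ≤ ∑ i ∈ Icc 1 M, v i ∧ ∑ i ∈ Icc 1 M, v i ≤ (istar : ℝ) + 1) :=
  stmt13_general ε τ δ p₁ M istar v hε hτ histar hδ0 hδτ hp₁ hv hth1 hth0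
end

section
/- Error bound of the polynomial-sized multiplication gadget: Let p₁ = i*τ + δ₁, p₂ = j*τ + δ₂ with 0 ≤ i*, j* ≤ 1/τ, 0 ≤ δ₁, δ₂ < τ, τ = 3ε, ε < 1/4. If S is a real with i*j* − (2/τ + 1) ≤ S ≤ i*j* + (2/τ + 1) and p = τ²S ± ε, then p = p₁p₂ ± 19ε. -/
/-- Error bound of the polynomial-sized multiplication gadget: with `τ = 3ε`,
`ε < 1/4`, `p₁ = i*τ + δ₁`, `p₂ = j*τ + δ₂`, if `S = i*j* ± (2/τ + 1)` and
`p = τ²S ± ε`, then `p = p₁p₂ ± 19ε`. -/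
theorem stmt15 (ε τ δ₁ δ₂ p₁ p₂ S p : ℝ) (istar jstar : ℕ)
    (hε : 0 < ε) (hε' : ε < 1/4) (hτ : τ = 3 * ε)
    (histar : (istar : ℝ) ≤ 1 / τ) (hjstar : (jstar : ℝ) ≤ 1 / τ)
    (hδ₁ : 0 ≤ δ₁) (hδ₁' : δ₁ < τ) (hδ₂ : 0 ≤ δ₂) (hδ₂' : δ₂ < τ)
    (hp₁ : p₁ = (istar : ℝ) * τ + δ₁) (hp₂ : p₂ = (jstar : ℝ) * τ + δ₂)
    (hS : |S - (istar : ℝ) * (jstar : ℝ)| ≤ 2 / τ + 1)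
    (hp : |p - τ ^ 2 * S| ≤ ε) :
    |p - p₁ * p₂| ≤ 19 * ε := by
  have hτ0 : 0 < τ := by rw [hτ]; linarith
  have hi : (istar : ℝ) * τ ≤ 1 := by
    rw [mul_comm]
    calc τ * (istar : ℝ) ≤ τ * (1 / τ) := by
          exact mul_le_mul_of_nonneg_left histar hτ0.le
      _ = 1 := by field_simp
  have hj : (jstar : ℝ) * τ ≤ 1 := by
    rw [mul_comm]
    calc τ * (jstar : ℝ) ≤ τ * (1 / τ) := by
          exact mul_le_mul_of_nonneg_left hjstar hτ0.le
      _ = 1 := by field_simp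
  have hi0 : (0:ℝ) ≤ istar := Nat.cast_nonneg _
  have hj0 : (0:ℝ) ≤ jstar := Nat.cast_nonneg _
  obtain ⟨hS1, hS2⟩ := abs_le.mp hS
  obtain ⟨hp1, hp2⟩ := abs_le.mp hp
  have h2τ : 2 / τ * τ ^ 2 = 2 * τ := by field_simp
  rw [abs_le]
  constructor
  · nlinarith [mul_le_mul_of_nonneg_left hS1 (sq_nonneg τ),
      mul_le_mul_of_nonneg_left hS2 (sq_nonneg τ),
      mul_nonneg hi0 hδ₂, mul_nonneg hj0 hδ₁,
      mul_nonneg hδ₁ hδ₂, sq_nonneg ε, sq_nonneg τ,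
      mul_le_mul hi hδ₂'.le hδ₂ (by linarith : (0:ℝ) ≤ 1),
      mul_le_mul hj hδ₁'.le hδ₁ (by linarith : (0:ℝ) ≤ 1),
      mul_lt_mul' hδ₁'.le hδ₂' hδ₂ hτ0]
  · nlinarith [mul_le_mul_of_nonneg_left hS1 (sq_nonneg τ),
      mul_le_mul_of_nonneg_left hS2 (sq_nonneg τ),
      mul_nonneg hi0 hδ₂, mul_nonneg hj0 hδ₁,
      mul_nonneg hδ₁ hδ₂, sq_nonneg ε, sq_nonneg τ,
      mul_le_mul hi hδ₂'.le hδ₂ (by linarith : (0:ℝ) ≤ 1),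
      mul_le_mul hj hδ₁'.le hδ₁ (by linarith : (0:ℝ) ≤ 1),
      mul_lt_mul' hδ₁'.le hδ₂' hδ₂ hτ0]
end

section
/- Brittle binary multiplication correctness: Let β = (1/2)log₂(1/ε) be an integer, ε ≤ 10⁻³, and p₁ = Σ_{i=1}^{β} b*_i 2^{−i} + δ with 3βε < δ < 2^{−β} − 3βε, b*_i ∈ {0,1}. Suppose b_i = b*_i for all i, s_i = p₂2^{−i} ± ε, w_i = s_i b_i ± ε, and p = min{1, Σᵢ wᵢ} ± ε. Then p = p₁p₂ ± 2√ε. -/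
/-!
Since `β = ½ log₂(1/ε)`, the threshold `2^{-β}` is exactly `√ε`. Each gadget term `wᵢ` is within
`2ε` of `p₂ b*ᵢ 2^{-i}`, so `Σ wᵢ` is within `2βε` of `p₂ (p₁ - δ)`; `δ > 3βε` and `p₁ ≤ 1` keep this
sum below `1`, so the `min` is inactive. The remaining errors `ε + 2βε + p₂δ` are bounded using
`δ < 2^{-β} - 3βε = √ε - 3βε` and `ε ≤ √ε` (as `√ε = 2^{-β} ≤ 1`).
-/

open Finset

lemma sqrt_eq_half_pow_of_eq_half_logb {ε : ℝ} {β : ℕ} (hε : 0 < ε)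
    (hβ : (β : ℝ) = (1/2) * Real.logb 2 (1/ε)) : √ε = (1/2 : ℝ) ^ β := by
  have hlog : Real.logb 2 ε = -(2 * β) := by
    rw [one_div ε, Real.logb_inv] at hβ
    linarith
  have hsq : ε = ((1/2 : ℝ) ^ β) ^ 2 := by
    rw [← Real.rpow_logb (b := 2) (by norm_num) (by norm_num) hε, hlog, ← pow_mul, one_div,
      inv_pow, ← Real.rpow_natCast, ← Real.rpow_neg (by norm_num)]
    push_cast
    ring_nf
  rw [hsq, Real.sqrt_sq (by positivity)]

lemma abs_sub_mul_le_of_abs_le_one {w s x b ε : ℝ} (hw : |w - s * b| ≤ ε) (hs : |s - x| ≤ ε)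
    (hb : |b| ≤ 1) : |w - x * b| ≤ 2 * ε := by
  have hsb : |s * b - x * b| ≤ ε := by
    rw [← sub_mul, abs_mul]
    simpa using mul_le_mul hs hb (abs_nonneg b) ((abs_nonneg _).trans hs)
  calc |w - x * b| ≤ |w - s * b| + |s * b - x * b| := abs_sub_le _ _ _
    _ ≤ 2 * ε := by linarith

lemma Finset.abs_sum_sub_sum_le {ι : Type*} (t : Finset ι) (f g : ι → ℝ) {c : ℝ}
    (h : ∀ i ∈ t, |f i - g i| ≤ c) : |∑ i ∈ t, f i - ∑ i ∈ t, g i| ≤ #t * c := by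
  rw [← sum_sub_distrib]
  calc |∑ i ∈ t, (f i - g i)| ≤ ∑ i ∈ t, |f i - g i| := abs_sum_le_sum_abs _ _
    _ ≤ #t • c := sum_le_card_nsmul _ _ _ h
    _ = #t * c := nsmul_eq_mul _ _

theorem stmt16_general (ε p₁ p₂ δ p : ℝ) (β : ℕ) (bstar b s w : ℕ → ℝ)
    (hε : 0 < ε)
    (hβ : (β : ℝ) = (1/2) * Real.logb 2 (1/ε))
    (hp₁r' : p₁ ≤ 1) (hp₂r : 0 ≤ p₂) (hp₂r' : p₂ ≤ 1)
    (hbstar : ∀ i, bstar i = 0 ∨ bstar i = 1)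
    (hδl : 3 * (β : ℝ) * ε < δ) (hδu : δ < (1/2 : ℝ) ^ β - 3 * (β : ℝ) * ε)
    (hp₁ : p₁ = (∑ i ∈ Icc 1 β, bstar i * (1/2 : ℝ) ^ i) + δ)
    (hb : ∀ i ∈ Icc 1 β, b i = bstar i)
    (hs : ∀ i ∈ Icc 1 β, |s i - p₂ * (1/2 : ℝ) ^ i| ≤ ε)
    (hw : ∀ i ∈ Icc 1 β, |w i - s i * b i| ≤ ε)
    (hp : |p - min 1 (∑ i ∈ Icc 1 β, w i)| ≤ ε) :
    |p - p₁ * p₂| ≤ 2 * Real.sqrt ε := by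
  set S := ∑ i ∈ Icc 1 β, bstar i * (1/2 : ℝ) ^ i
  set W := ∑ i ∈ Icc 1 β, w i
  have hsqrt : √ε = (1/2 : ℝ) ^ β := sqrt_eq_half_pow_of_eq_half_logb hε hβ
  have hβε : 0 ≤ (β : ℝ) * ε := by positivity
  have hW : |W - p₂ * S| ≤ 2 * β * ε := by
    have hterm : ∀ i ∈ Icc 1 β, |w i - p₂ * (bstar i * (1/2 : ℝ) ^ i)| ≤ 2 * ε := fun i hi ↦ by
      have hbit : |bstar i| ≤ 1 := by rcases hbstar i with h | h <;> simp [h]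
      have := abs_sub_mul_le_of_abs_le_one (hb i hi ▸ hw i hi) (hs i hi) hbit
      rwa [show p₂ * (1/2 : ℝ) ^ i * bstar i = p₂ * (bstar i * (1/2 : ℝ) ^ i) by ring] at this
    have := abs_sum_sub_sum_le _ _ _ hterm
    rwa [← mul_sum, Nat.card_Icc, Nat.add_sub_cancel, ← mul_assoc, mul_comm (β : ℝ)] at this
  obtain ⟨hW₁, hW₂⟩ := abs_le.mp hW
  have hS : 0 ≤ S := sum_nonneg fun i _ ↦ by rcases hbstar i with h | h <;> simp [h]
  have hmin : min 1 W = W := min_eq_right (by nlinarith)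
  have hround : |p₂ * S - p₁ * p₂| ≤ δ := by
    rw [hp₁, show p₂ * S - (S + δ) * p₂ = -(p₂ * δ) by ring, abs_neg, abs_mul,
      abs_of_nonneg hp₂r, abs_of_pos (by linarith)]
    exact mul_le_of_le_one_left (by linarith) hp₂r'
  have hε_le : ε ≤ √ε := by
    have : √ε ≤ 1 := hsqrt ▸ pow_le_one₀ (by norm_num) (by norm_num)
    nlinarith [Real.mul_self_sqrt hε.le, Real.sqrt_nonneg ε]
  rw [hmin] at hp
  have := abs_sub_le p W (p₁ * p₂)
  have := abs_sub_le W (p₂ * S) (p₁ * p₂)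
  linarith

open Finset in
/-- Brittle binary multiplication correctness: with `β = (1/2)log₂(1/ε)` integral,
`ε ≤ 10⁻³`, `p₁ = Σᵢ b*ᵢ 2^{-i} + δ` where `3βε < δ < 2^{-β} - 3βε`, and the gadget
guarantees `bᵢ = b*ᵢ`, `sᵢ = p₂2^{-i} ± ε`, `wᵢ = sᵢbᵢ ± ε`, `p = min{1, Σᵢwᵢ} ± ε`,
the output satisfies `p = p₁p₂ ± 2√ε`. -/
theorem stmt16 (ε p₁ p₂ δ p : ℝ) (β : ℕ) (bstar b s w : ℕ → ℝ)
    (hε : 0 < ε) (hε' : ε ≤ 1/1000)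
    (hβ : (β : ℝ) = (1/2) * Real.logb 2 (1/ε))
    (hp₁r : 0 ≤ p₁) (hp₁r' : p₁ ≤ 1) (hp₂r : 0 ≤ p₂) (hp₂r' : p₂ ≤ 1)
    (hbstar : ∀ i, bstar i = 0 ∨ bstar i = 1)
    (hδl : 3 * (β : ℝ) * ε < δ) (hδu : δ < (1/2 : ℝ) ^ β - 3 * (β : ℝ) * ε)
    (hp₁ : p₁ = (∑ i ∈ Icc 1 β, bstar i * (1/2 : ℝ) ^ i) + δ)
    (hb : ∀ i ∈ Icc 1 β, b i = bstar i)
    (hs : ∀ i ∈ Icc 1 β, |s i - p₂ * (1/2 : ℝ) ^ i| ≤ ε)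
    (hw : ∀ i ∈ Icc 1 β, |w i - s i * b i| ≤ ε)
    (hp : |p - min 1 (∑ i ∈ Icc 1 β, w i)| ≤ ε) :
    |p - p₁ * p₂| ≤ 2 * Real.sqrt ε :=
  stmt16_general ε p₁ p₂ δ p β bstar b s w hε hβ hp₁r' hp₂r hp₂r' hbstar hδl hδu hp₁ hb hs hw hp
end

section
/- Perturbation separation claim: Let β = (1/2)log₂(1/ε), Δ = 7βε, ε ≤ 10⁻⁵, and let p̃₁ > d₁ > d₂ ≥ 0 be reals such that both consecutive differences p̃₁ − d₁ and d₁ − d₂ equal Δ ± 4ε. Then at most one of p̃₁, d₁, d₂ is within distance 3βε of an integer multiple of 2^{−β}. -/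
/-- `x` is within distance `3βε` of an integer multiple of `2^{-β}`. -/
def closeToMultiple (β ε x : ℝ) : Prop :=
  ∃ k : ℤ, |x - (k : ℝ) * (2 : ℝ) ^ (-β)| ≤ 3 * β * ε

lemma pow2_big {β : ℝ} (hβ : 8 ≤ β) : 20 * β + 8 < (2:ℝ) ^ β := by
  have h1 : (2:ℝ) ^ β = (2:ℝ) ^ (8:ℝ) * (2:ℝ) ^ (β - 8) := by
    rw [← Real.rpow_add two_pos]; ring_nf
  have h2 : (2:ℝ) ^ (β - 8) = Real.exp (Real.log 2 * (β - 8)) := by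
    rw [Real.rpow_def_of_pos two_pos]
  have hlog : (0.6931:ℝ) ≤ Real.log 2 := by
    have := Real.log_two_gt_d9; linarith
  have h8 : (2:ℝ) ^ (8:ℝ) = 256 := by
    rw [show (8:ℝ) = ((8:ℕ):ℝ) by norm_num, Real.rpow_natCast]; norm_num
  have hb8 : (0:ℝ) ≤ β - 8 := by linarith
  have : 256 * (1 + (β - 8) * 0.6931) ≤ (2:ℝ) ^ β := by
    rw [h1, h8, h2]
    nlinarith [Real.add_one_le_exp (Real.log 2 * (β - 8))]
  nlinarith

lemma key_sep (ε β : ℝ) (hε : 0 < ε) (hβ8 : 8 ≤ β)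
    (hT : ((2:ℝ)^(-β)) * ((2:ℝ)^(-β)) = ε) (c : ℝ) (hc : c = 1 ∨ c = 2)
    (x y : ℝ) (hg : |x - y - c * (7 * β * ε)| ≤ 4 * c * ε)
    (hx : closeToMultiple β ε x) (hy : closeToMultiple β ε y) : False := by
  obtain ⟨k, hk⟩ := hx
  obtain ⟨l, hl⟩ := hy
  set T : ℝ := (2:ℝ)^(-β) with hTdef
  have hTpos : 0 < T := Real.rpow_pos_of_pos two_pos _
  have habs : |x - y - ((k - l : ℤ) : ℝ) * T| ≤ 6 * β * ε := by
    have : x - y - ((k - l : ℤ) : ℝ) * T = (x - (k:ℝ)*T) - (y - (l:ℝ)*T) := by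
      push_cast; ring
    rw [this]
    calc |(x - (k:ℝ)*T) - (y - (l:ℝ)*T)| ≤ |x - (k:ℝ)*T| + |y - (l:ℝ)*T| :=
          abs_sub _ _
      _ ≤ 6 * β * ε := by linarith
  set m : ℤ := k - l with hm
  rw [abs_le] at habs hg
  -- lower and upper bounds on m * T
  have hlow : 0 < (m:ℝ) * T := by
    rcases hc with rfl | rfl <;> nlinarith
  have hTub : ((7*c+6) * β + 4*c) * ε < T := by
    have h20 : (7*c+6) * β + 4*c ≤ 20 * β + 8 := by
      rcases hc with rfl | rfl <;> nlinarith
    have h2b : 20 * β + 8 < (2:ℝ) ^ β := pow2_big hβ8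
    have hTinv : T * (2:ℝ)^β = 1 := by
      rw [hTdef, ← Real.rpow_add two_pos]; simp
    -- (A)ε < T  ⟺  A * T < 1 since ε = T²
    have hA : ((7*c+6) * β + 4*c) * T < (2:ℝ)^β * T := by
      have hApos : 0 < (7*c+6) * β + 4*c := by rcases hc with rfl | rfl <;> nlinarith
      have := h20.trans_lt h2b
      nlinarith
    calc ((7*c+6) * β + 4*c) * ε = (((7*c+6) * β + 4*c) * T) * T := by
          rw [← hT]; ring
      _ < ((2:ℝ)^β * T) * T := by nlinarith
      _ = T := by nlinarith [hTinv]
  have hhigh : (m:ℝ) * T < T := by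
    have : (m:ℝ) * T ≤ c*(7*β*ε) + 4*c*ε + 6*β*ε := by linarith
    have heq : c*(7*β*ε) + 4*c*ε + 6*β*ε = ((7*c+6) * β + 4*c) * ε := by ring
    linarith [heq ▸ this]
  have hm0 : 0 < m := by
    by_contra h
    push_neg at h
    have : (m:ℝ) ≤ 0 := by exact_mod_cast h
    nlinarith
  have hm1 : (m:ℝ) < 1 := by
    nlinarith
  have : (1:ℝ) ≤ (m:ℝ) := by exact_mod_cast hm0
  linarith

/-- Perturbation separation claim: with `β = (1/2)log₂(1/ε)`, `Δ = 7βε`, `ε ≤ 10⁻⁵`,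
if `p̃₁ > d₁ > d₂ ≥ 0` with consecutive differences `Δ ± 4ε`, then at most one of
`p̃₁, d₁, d₂` is within `3βε` of an integer multiple of `2^{-β}`. -/
theorem stmt17 (ε β Δ pt d₁ d₂ : ℝ)
    (hε : 0 < ε) (hε' : ε ≤ 1/100000)
    (hβ : β = (1/2) * Real.logb 2 (1/ε)) (hΔ : Δ = 7 * β * ε)
    (hd₂ : 0 ≤ d₂) (h₁ : d₂ < d₁) (h₂ : d₁ < pt)
    (hgap1 : |pt - d₁ - Δ| ≤ 4 * ε) (hgap2 : |d₁ - d₂ - Δ| ≤ 4 * ε) :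
    ¬(closeToMultiple β ε pt ∧ closeToMultiple β ε d₁) ∧
    ¬(closeToMultiple β ε pt ∧ closeToMultiple β ε d₂) ∧
    ¬(closeToMultiple β ε d₁ ∧ closeToMultiple β ε d₂) := by
  have hβ8 : 8 ≤ β := by
    have h16 : (16:ℝ) ≤ Real.logb 2 (1/ε) := by
      have h1 : (2:ℝ)^(16:ℝ) ≤ 1/ε := by
        have : (2:ℝ)^(16:ℝ) = 65536 := by
          rw [show (16:ℝ) = ((16:ℕ):ℝ) by norm_num, Real.rpow_natCast]; norm_num
        rw [this]
        rw [le_div_iff₀ hε]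
        nlinarith
      calc (16:ℝ) = Real.logb 2 ((2:ℝ)^(16:ℝ)) := by
            rw [Real.logb_rpow (by norm_num) (by norm_num)]
        _ ≤ Real.logb 2 (1/ε) := by
            exact Real.logb_le_logb_of_le (by norm_num) (Real.rpow_pos_of_pos two_pos _) h1
    linarith [hβ ▸ (by linarith : (8:ℝ) ≤ (1/2) * Real.logb 2 (1/ε))]
  have hT : ((2:ℝ)^(-β)) * ((2:ℝ)^(-β)) = ε := by
    rw [← Real.rpow_add two_pos]
    have : -β + -β = Real.logb 2 ε := by
      rw [hβ, show (1:ℝ)/ε = ε⁻¹ from one_div ε, Real.logb_inv]; ring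
    rw [this, Real.rpow_logb two_pos (by norm_num) hε]
  have hgap3 : |pt - d₂ - 2 * (7 * β * ε)| ≤ 4 * 2 * ε := by
    have : pt - d₂ - 2 * (7*β*ε) = (pt - d₁ - Δ) + (d₁ - d₂ - Δ) := by rw [hΔ]; ring
    rw [this]
    calc |(pt - d₁ - Δ) + (d₁ - d₂ - Δ)| ≤ |pt - d₁ - Δ| + |d₁ - d₂ - Δ| := abs_add_le _ _
      _ ≤ 4 * 2 * ε := by linarith
  refine ⟨fun ⟨ha, hb⟩ => ?_, fun ⟨ha, hb⟩ => ?_, fun ⟨ha, hb⟩ => ?_⟩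
  · exact key_sep ε β hε hβ8 hT 1 (Or.inl rfl) pt d₁
      (by rw [one_mul]; rw [hΔ] at hgap1; convert hgap1 using 2; ring) ha hb
  · exact key_sep ε β hε hβ8 hT 2 (Or.inr rfl) pt d₂ hgap3 ha hb
  · exact key_sep ε β hε hβ8 hT 1 (Or.inl rfl) d₁ d₂
      (by rw [one_mul]; rw [hΔ] at hgap2; convert hgap2 using 2; ring) ha hb
end

section
/- Robust multiplication via median: Suppose p₁, p₂ ∈ [0,1], p̃₁ = p₁ ± (2Δ + 11ε) with Δ = 7βε, β = (1/2)log₂(1/ε), ε ≤ 10⁻⁵, and w₁, w₂, w₃ ∈ [0,1] are such that at least two of them satisfy wⱼ = dⱼ·p₂ ± 2√ε where d₁ = p̃₁, and d₂, d₃ ∈ [p̃₁ − 2Δ − 4ε, p̃₁]. If p = median{w₁,w₂,w₃} ± 20ε, then p = p₁p₂ ± 3√ε. -/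
set_option maxHeartbeats 1000000

lemma med_pair (a b c x η : ℝ)
    (h : (|a - x| ≤ η ∧ |b - x| ≤ η) ∨ (|a - x| ≤ η ∧ |c - x| ≤ η) ∨ (|b - x| ≤ η ∧ |c - x| ≤ η)) :
    |med a b c - x| ≤ η := by
  unfold med
  simp only [abs_le] at *
  rcases le_total a b with h1|h1 <;> rcases le_total a c with h2|h2 <;>
    rcases le_total b c with h3|h3 <;>
    simp [min_def, max_def, h1, h2, h3] <;>
    rcases h with ⟨hp,hq⟩|⟨hp,hq⟩|⟨hp,hq⟩ <;> constructor <;> linarith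

lemma neg_mul_log_le (t u : ℝ) (ht : 0 < t) (htu : t ≤ u) (hu : u ≤ 1) :
    -(t * Real.log t) ≤ u - u * Real.log u := by
  have hu0 : 0 < u := lt_of_lt_of_le ht htu
  have h1 : Real.log (u / t) ≤ u / t - 1 := Real.log_le_sub_one_of_pos (by positivity)
  have h2 : Real.log (u / t) = Real.log u - Real.log t := Real.log_div (ne_of_gt hu0) (ne_of_gt ht)
  have h3 : Real.log u ≤ 0 := Real.log_nonpos (le_of_lt hu0) hu
  have h4 : t * Real.log (u / t) ≤ u - t := by
    have := mul_le_mul_of_nonneg_left h1 (le_of_lt ht)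
    calc t * Real.log (u/t) ≤ t * (u/t - 1) := this
      _ = u - t := by field_simp
  have h5 : t * (-Real.log u) ≤ u * (-Real.log u) :=
    mul_le_mul_of_nonneg_right htu (neg_nonneg.mpr h3)
  have h6 : t * Real.log (u / t) = t * Real.log u - t * Real.log t := by rw [h2]; ring
  linarith

lemma key_bound (ε : ℝ) (hε : 0 < ε) (hε' : ε ≤ 1/100000) :
    14 * ε * (Real.log (1/ε) / Real.log 2) + 35 * ε ≤ Real.sqrt ε := by
  set t := Real.sqrt ε with hts
  have ht0 : 0 < t := Real.sqrt_pos.mpr hε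
  have htsq : t ^ 2 = ε := Real.sq_sqrt hε.le
  set u := Real.sqrt (1/100000 : ℝ) with hus
  have hu0 : 0 < u := Real.sqrt_pos.mpr (by norm_num)
  have htu : t ≤ u := Real.sqrt_le_sqrt hε'
  have hu1 : u ≤ 1 := by
    rw [hus, show (1:ℝ) = Real.sqrt 1 by simp]
    exact Real.sqrt_le_sqrt (by norm_num)
  have hua : u ≤ 0.0031623 := by
    rw [hus, show (0.0031623:ℝ) = Real.sqrt (0.0031623^2) by
      rw [Real.sqrt_sq]; norm_num]
    exact Real.sqrt_le_sqrt (by norm_num)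
  have hlogε : Real.log ε = 2 * Real.log t := by
    rw [← htsq, Real.log_pow]; push_cast; ring
  have hlog1ε : Real.log (1/ε) = -(2 * Real.log t) := by
    rw [one_div, Real.log_inv, hlogε]
  have hlogu : -Real.log u = (1/2) * Real.log 100000 := by
    rw [hus, Real.log_sqrt (by norm_num), Real.log_div (by norm_num) (by norm_num)]
    simp; ring
  have hlog10 : Real.log 100000 = 5 * Real.log 10 := by
    rw [show (100000:ℝ) = 10^5 by norm_num, Real.log_pow]; push_cast; ring
  have h10 : Real.log 10 ≤ (10/3) * Real.log 2 := by
    have : Real.log (10^3) ≤ Real.log (2^10) := Real.log_le_log (by positivity) (by norm_num)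
    rw [Real.log_pow, Real.log_pow] at this
    push_cast at this; linarith
  have hl2lb : (0.6931471803:ℝ) < Real.log 2 := Real.log_two_gt_d9
  have hl2ub : Real.log 2 < 0.6931471808 := Real.log_two_lt_d9
  have hnegu : -Real.log u ≤ (25/3) * Real.log 2 := by
    rw [hlogu, hlog10]; linarith
  have hnegu0 : 0 ≤ -Real.log u := neg_nonneg.mpr (Real.log_nonpos hu0.le hu1)
  have hkey : -(t * Real.log t) ≤ u - u * Real.log u := neg_mul_log_le t u ht0 htu hu1
  have hbound : u - u * Real.log u ≤ 0.0031623 * (1 + (25/3) * 0.6931471808) := by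
    have h1 : u * (-Real.log u) ≤ 0.0031623 * ((25/3) * 0.6931471808) := by
      apply mul_le_mul hua (by nlinarith) hnegu0 (by norm_num)
    nlinarith
  have hl2pos : 0 < Real.log 2 := by linarith
  rw [hlog1ε]
  have hexpand : 14 * ε * (-(2 * Real.log t) / Real.log 2) + 35 * ε
      = (28 / Real.log 2) * t * (-(t * Real.log t)) + 35 * t * t := by
    rw [← htsq]; field_simp; ring
  rw [hexpand]
  have hcoef : (28 / Real.log 2) ≤ 28 / 0.6931471803 := by
    apply div_le_div_of_nonneg_left (by norm_num) (by norm_num) hl2lb.le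
  have hstep : (28 / Real.log 2) * t * (-(t * Real.log t)) + 35 * t * t
      ≤ (28 / 0.6931471803) * t * (0.0031623 * (1 + (25/3) * 0.6931471808)) + 35 * t * 0.0031623 := by
    have hpos : 0 ≤ -(t * Real.log t) := by
      have := Real.log_nonpos ht0.le (le_trans htu hu1)
      nlinarith
    have h1 : (28 / Real.log 2) * t * (-(t * Real.log t)) ≤ (28 / 0.6931471803) * t * (0.0031623 * (1 + (25/3) * 0.6931471808)) := by
      apply mul_le_mul
      · apply mul_le_mul_of_nonneg_right hcoef ht0.le
      · linarith [hkey, hbound]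
      · exact hpos
      · positivity
    nlinarith [ht0.le, le_trans htu hua]
  refine le_trans hstep ?_
  have : (28 / 0.6931471803) * (0.0031623 * (1 + (25/3) * 0.6931471808)) + 35 * 0.0031623 ≤ (1:ℝ) := by
    norm_num
  nlinarith [ht0.le]

/-- Robust multiplication via median: with `β = (1/2)log₂(1/ε)`, `Δ = 7βε`,
`ε ≤ 10⁻⁵`, `p̃₁ = p₁ ± (2Δ + 11ε)`, perturbed inputs `dⱼ ∈ [p̃₁ - 2Δ - 4ε, p̃₁]`
with `d₀ = p̃₁`, and at least two of the three brittle outputs satisfying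
`wⱼ = dⱼp₂ ± 2√ε`: if `p = median{w₁,w₂,w₃} ± 20ε`, then `p = p₁p₂ ± 3√ε`. -/
theorem stmt19 (ε β Δ p₁ p₂ pt p : ℝ) (w d : Fin 3 → ℝ)
    (hε : 0 < ε) (hε' : ε ≤ 1/100000)
    (hβ : β = (1/2) * Real.logb 2 (1/ε)) (hΔ : Δ = 7 * β * ε)
    (hp₁ : 0 ≤ p₁) (hp₁' : p₁ ≤ 1) (hp₂ : 0 ≤ p₂) (hp₂' : p₂ ≤ 1)
    (hpt : |pt - p₁| ≤ 2 * Δ + 11 * ε)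
    (hw : ∀ j, 0 ≤ w j ∧ w j ≤ 1)
    (hd0 : d 0 = pt)
    (hdr : ∀ j, pt - 2 * Δ - 4 * ε ≤ d j ∧ d j ≤ pt)
    (htwo : ∃ j j' : Fin 3, j ≠ j' ∧
      |w j - d j * p₂| ≤ 2 * Real.sqrt ε ∧ |w j' - d j' * p₂| ≤ 2 * Real.sqrt ε)
    (hp : |p - med (w 0) (w 1) (w 2)| ≤ 20 * ε) :
    |p - p₁ * p₂| ≤ 3 * Real.sqrt ε := by
  have ht0 : 0 < Real.sqrt ε := Real.sqrt_pos.mpr hε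
  have hΔ0 : 0 ≤ Δ := by
    rw [hΔ, hβ]
    have h1 : 0 ≤ Real.logb 2 (1/ε) := Real.logb_nonneg (by norm_num)
      (one_le_one_div hε (le_trans hε' (by norm_num)))
    positivity
  set η := 2 * Real.sqrt ε + 2 * Δ + 4 * ε with hη
  -- any good output is within η of pt * p₂
  have hgood : ∀ j, |w j - d j * p₂| ≤ 2 * Real.sqrt ε → |w j - pt * p₂| ≤ η := by
    intro j hj
    have h1 := (hdr j).1
    have h2 := (hdr j).2
    have habs : |d j - pt| ≤ 2 * Δ + 4 * ε := abs_le.mpr ⟨by linarith, by linarith⟩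
    have h3 : |d j * p₂ - pt * p₂| = |d j - pt| * p₂ := by
      rw [← sub_mul, abs_mul, abs_of_nonneg hp₂]
    have h4 : |d j - pt| * p₂ ≤ 2 * Δ + 4 * ε := by
      calc |d j - pt| * p₂ ≤ |d j - pt| * 1 :=
            mul_le_mul_of_nonneg_left hp₂' (abs_nonneg _)
        _ = |d j - pt| := mul_one _
        _ ≤ 2 * Δ + 4 * ε := habs
    calc |w j - pt * p₂| ≤ |w j - d j * p₂| + |d j * p₂ - pt * p₂| := abs_sub_le _ _ _
      _ ≤ 2 * Real.sqrt ε + (2 * Δ + 4 * ε) := by rw [h3]; linarith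
      _ = η := by rw [hη]; ring
  -- median is within η of pt * p₂
  have hmed : |med (w 0) (w 1) (w 2) - pt * p₂| ≤ η := by
    apply med_pair
    obtain ⟨j, j', hne, ha, hb⟩ := htwo
    have ga := hgood j ha
    have gb := hgood j' hb
    fin_cases j <;> fin_cases j' <;> simp_all <;> tauto
  -- pt * p₂ is close to p₁ * p₂
  have hpp : |pt * p₂ - p₁ * p₂| ≤ 2 * Δ + 11 * ε := by
    rw [← sub_mul, abs_mul, abs_of_nonneg hp₂]
    calc |pt - p₁| * p₂ ≤ |pt - p₁| * 1 :=
          mul_le_mul_of_nonneg_left hp₂' (abs_nonneg _)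
      _ = |pt - p₁| := mul_one _
      _ ≤ 2 * Δ + 11 * ε := hpt
  -- the budget
  have hkb := key_bound ε hε hε'
  have hΔsum : 4 * Δ + 35 * ε ≤ Real.sqrt ε := by
    have heq : 4 * Δ + 35 * ε = 14 * ε * (Real.log (1/ε) / Real.log 2) + 35 * ε := by
      rw [hΔ, hβ, Real.logb]; ring
    rw [heq]; exact hkb
  calc |p - p₁ * p₂|
      ≤ |p - med (w 0) (w 1) (w 2)| + |med (w 0) (w 1) (w 2) - pt * p₂|
        + |pt * p₂ - p₁ * p₂| := by
        have h1 := abs_sub_le p (med (w 0) (w 1) (w 2)) (p₁ * p₂)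
        have h2 := abs_sub_le (med (w 0) (w 1) (w 2)) (pt * p₂) (p₁ * p₂)
        linarith
    _ ≤ 20 * ε + η + (2 * Δ + 11 * ε) := by linarith
    _ = 2 * Real.sqrt ε + (4 * Δ + 35 * ε) := by rw [hη]; ring
    _ ≤ 2 * Real.sqrt ε + Real.sqrt ε := by linarith
    _ = 3 * Real.sqrt ε := by ring
end
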